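/- arXiv:2509.11992 — 4 statements merged into one kernel-verified Lean document; each statement's English description precedes it below -/
import Mathlib

section
/- Let G be a finite simple graph with maximum degree h, let t ≥ 2, and let h_1, …, h_t be nonnegative integers with h_1 + ⋯ + h_t = h - t + 2. Suppose (X_1, …, X_t) is a partition of V(G) maximizing f(X_1,…,X_t) = Σ_i h_i|X_i| - Σ_i |E(G[X_i])|. Then for every i and every vertex x ∈ X_i, the degree of x in the induced subgraph G[X_i] is at most h_i. -/
open Finset

variable {V : Type*}

/-- The number of edges of the subgraph of `G` induced by the vertex set `s`. -/
noncomputable def inducedEdgeCount [Fintype V] (G : SimpleGraph V) (s : Finset V) : ℕ :=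
  Nat.card (SimpleGraph.induce (↑s : Set V) G).edgeSet

/-- The value `f(X_1,…,X_t) = Σ_i h_i |X_i| - Σ_i |E(G[X_i])|` of an ordered partition. -/
noncomputable def partitionValue [Fintype V] (G : SimpleGraph V) {t : ℕ}
    (hs : Fin t → ℕ) (X : Fin t → Finset V) : ℤ :=
  (∑ i, (hs i : ℤ) * (X i).card) - ∑ i, (inducedEdgeCount G (X i) : ℤ)

lemma inducedEdgeCount_eq [Fintype V] [DecidableEq V] (G : SimpleGraph V) [DecidableRel G.Adj]
    (s : Finset V) :
    inducedEdgeCount G s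
      = (G.edgeFinset.filter (fun e => ∀ v ∈ e, v ∈ s)).card := by
  rw [inducedEdgeCount, Nat.card_eq_fintype_card, ← SimpleGraph.edgeFinset_card]
  rw [← Finset.card_image_of_injective _ (Sym2.map.injective Subtype.val_injective)]
  congr 1
  ext e
  induction e with
  | _ a b =>
    simp only [Finset.mem_image, SimpleGraph.mem_edgeFinset, Finset.mem_filter,
      SimpleGraph.mem_edgeSet, Sym2.mem_iff]
    constructor
    · rintro ⟨e', he', heq⟩
      induction e' with
      | _ u v =>
        rw [Sym2.map_pair_eq, Sym2.eq_iff] at heq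
        simp only [SimpleGraph.mem_edgeSet, SimpleGraph.comap_adj] at he'
        rcases heq with ⟨h1, h2⟩ | ⟨h1, h2⟩
        · subst h1; subst h2
          exact ⟨he', by rintro w (rfl | rfl) <;> simp⟩
        · subst h1; subst h2
          exact ⟨he'.symm, by rintro w (rfl | rfl) <;> simp⟩
    · rintro ⟨hab, hmem⟩
      exact ⟨s(⟨a, hmem a (Or.inl rfl)⟩, ⟨b, hmem b (Or.inr rfl)⟩), hab, by
        rw [Sym2.map_pair_eq]⟩

lemma inducedEdgeCount_erase [Fintype V] [DecidableEq V] (G : SimpleGraph V)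
    [DecidableRel G.Adj] {s : Finset V} {x : V} (hx : x ∈ s) :
    inducedEdgeCount G s
      = inducedEdgeCount G (s.erase x) + (s.filter (fun y => G.Adj x y)).card := by
  classical
  rw [inducedEdgeCount_eq, inducedEdgeCount_eq]
  have hsplit := Finset.card_filter_add_card_filter_not
    (s := G.edgeFinset.filter (fun e => ∀ v ∈ e, v ∈ s)) (p := fun e => x ∈ e)
  have h1 : (G.edgeFinset.filter (fun e => ∀ v ∈ e, v ∈ s)).filter (fun e => ¬ x ∈ e)
      = G.edgeFinset.filter (fun e => ∀ v ∈ e, v ∈ s.erase x) := by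
    ext e
    simp only [Finset.mem_filter, Finset.mem_erase, and_assoc]
    constructor
    · rintro ⟨he, hv, hxe⟩
      exact ⟨he, fun v hv' => ⟨fun h => hxe (h ▸ hv'), hv v hv'⟩⟩
    · rintro ⟨he, hv⟩
      exact ⟨he, fun v hv' => (hv v hv').2, fun h => (hv x h).1 rfl⟩
  have h2 : (G.edgeFinset.filter (fun e => ∀ v ∈ e, v ∈ s)).filter (fun e => x ∈ e)
      = (s.filter (fun y => G.Adj x y)).image (fun y => s(x, y)) := by
    ext e
    induction e with
    | _ a b =>
      simp only [Finset.mem_filter, Finset.mem_image, SimpleGraph.mem_edgeFinset,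
        SimpleGraph.mem_edgeSet, Sym2.mem_iff]
      constructor
      · rintro ⟨⟨hab, hv⟩, rfl | rfl⟩
        · exact ⟨b, ⟨hv b (Or.inr rfl), hab⟩, rfl⟩
        · exact ⟨a, ⟨hv a (Or.inl rfl), hab.symm⟩, Sym2.eq_swap⟩
      · rintro ⟨y, ⟨hys, hadj⟩, heq⟩
        rw [Sym2.eq_iff] at heq
        rcases heq with ⟨rfl, rfl⟩ | ⟨rfl, rfl⟩
        · exact ⟨⟨hadj, by rintro w (rfl | rfl) <;> assumption⟩, Or.inl rfl⟩
        · exact ⟨⟨hadj.symm, by rintro w (rfl | rfl) <;> assumption⟩, Or.inr rfl⟩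
  have h3 : ((s.filter (fun y => G.Adj x y)).image (fun y => s(x, y))).card
      = (s.filter (fun y => G.Adj x y)).card :=
    Finset.card_image_of_injective _ (fun a b hab => by rwa [Sym2.congr_right] at hab)
  rw [h1, h2, h3] at hsplit
  omega

/-- Let `G` be a finite simple graph with maximum degree `h`, let `t ≥ 2`, and let
`h_1, …, h_t` be nonnegative integers with `h_1 + ⋯ + h_t = h - t + 2`.  If the ordered
partition `(X_1, …, X_t)` of `V(G)` maximizes `f(X_1,…,X_t) = Σ_i h_i|X_i| - Σ_i |E(G[X_i])|`
over all ordered partitions into `t` (possibly empty) parts, then for every `i` and every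
vertex `x ∈ X_i`, the degree of `x` in the induced subgraph `G[X_i]` is at most `h_i`. -/
theorem stmt_6 [Fintype V] [DecidableEq V] (G : SimpleGraph V) [DecidableRel G.Adj]
    (h t : ℕ) (hΔ : G.maxDegree = h) (ht : 2 ≤ t)
    (hs : Fin t → ℕ) (hsum : (∑ i, (hs i : ℤ)) = (h : ℤ) - t + 2)
    (X : Fin t → Finset V)
    (hdisj : ∀ i j, i ≠ j → Disjoint (X i) (X j))
    (hcover : ∀ v : V, ∃ i, v ∈ X i)
    (hmax : ∀ Y : Fin t → Finset V, (∀ i j, i ≠ j → Disjoint (Y i) (Y j)) →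
      (∀ v : V, ∃ i, v ∈ Y i) → partitionValue G hs Y ≤ partitionValue G hs X) :
    ∀ i : Fin t, ∀ x ∈ X i, ((X i).filter (fun y => G.Adj x y)).card ≤ hs i := by
  intro i x hx
  by_contra hcon
  push_neg at hcon
  set d : Fin t → ℤ := fun k => (((X k).filter (fun y => G.Adj x y)).card : ℤ) with hd
  have hdi : (hs i : ℤ) + 1 ≤ d i := by
    simp only [hd]
    exact_mod_cast hcon
  -- a helper to compare sums differing only at i and j
  have keysum : ∀ (j : Fin t), j ≠ i → ∀ (f g : Fin t → ℤ),
      (∀ k, k ≠ i → k ≠ j → f k = g k) →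
      (∑ k, f k) - (∑ k, g k) = (f i - g i) + (f j - g j) := by
    intro j hji f g hfg
    rw [← Finset.sum_sub_distrib]
    have : ∑ k, (f k - g k) = ∑ k ∈ ({i, j} : Finset (Fin t)), (f k - g k) := by
      refine (Finset.sum_subset (Finset.subset_univ _) ?_).symm
      intro k _ hk
      simp only [Finset.mem_insert, Finset.mem_singleton] at hk
      push_neg at hk
      rw [hfg k hk.1 hk.2, sub_self]
    rw [this, Finset.sum_pair (fun hij => hji hij.symm)]
  -- main claim: for every j ≠ i, hs j + 1 ≤ d j
  have claim : ∀ j : Fin t, j ≠ i → (hs j : ℤ) + 1 ≤ d j := by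
    intro j hji
    have hxj : x ∉ X j := fun hxj =>
      Finset.disjoint_left.mp (hdisj j i hji) hxj hx
    set Y : Fin t → Finset V :=
      fun k => if k = i then (X i).erase x else if k = j then insert x (X j) else X k with hY
    have hij : i ≠ j := fun e => hji e.symm
    have hYmem : ∀ k v, v ∈ Y k ↔ ((v ∈ X k ∧ ¬(k = i ∧ v = x)) ∨ (k = j ∧ v = x)) := by
      intro k v
      rcases eq_or_ne k i with h1 | h1
      · show v ∈ (if k = i then (X i).erase x else if k = j then insert x (X j) else X k) ↔ _
        rw [if_pos h1, Finset.mem_erase]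
        have : ¬ (k = j) := fun e => hij (h1 ▸ e)
        subst h1
        tauto
      · rcases eq_or_ne k j with h2 | h2
        · show v ∈ (if k = i then (X i).erase x else if k = j then insert x (X j) else X k) ↔ _
          rw [if_neg h1, if_pos h2, Finset.mem_insert]
          subst h2
          tauto
        · show v ∈ (if k = i then (X i).erase x else if k = j then insert x (X j) else X k) ↔ _
          rw [if_neg h1, if_neg h2]
          tauto
    have hYdisj : ∀ a b, a ≠ b → Disjoint (Y a) (Y b) := by
      intro a b hab
      rw [Finset.disjoint_left]
      intro v hva hvb
      rw [hYmem] at hva hvb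
      have hmemuniq : ∀ c, v ∈ X c → v = x → c = i := by
        intro c hvc hvx
        by_contra hci
        exact Finset.disjoint_left.mp (hdisj c i hci) hvc (hvx ▸ hx)
      rcases hva with ⟨hva, hna⟩ | ⟨rfl, rfl⟩ <;>
        rcases hvb with ⟨hvb, hnb⟩ | ⟨hbj, hvx⟩
      · exact Finset.disjoint_left.mp (hdisj a b hab) hva hvb
      · subst hvx; exact hna ⟨hmemuniq a hva rfl, rfl⟩
      · exact hnb ⟨hmemuniq b hvb rfl, rfl⟩
      · exact hab (hbj ▸ rfl)
    have hYcover : ∀ v : V, ∃ k, v ∈ Y k := by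
      intro v
      by_cases hvx : v = x
      · exact ⟨j, (hYmem j v).mpr (Or.inr ⟨rfl, hvx⟩)⟩
      · obtain ⟨k, hk⟩ := hcover v
        exact ⟨k, (hYmem k v).mpr (Or.inl ⟨hk, fun ⟨_, hvx'⟩ => hvx hvx'⟩)⟩
    have hineq := hmax Y hYdisj hYcover
    -- compute the difference of the two sums
    have hYi : Y i = (X i).erase x := by simp [hY]
    have hYj : Y j = insert x (X j) := by simp [hY, fun hij : j = i => hji hij]
    have hYk : ∀ k, k ≠ i → k ≠ j → Y k = X k := by
      intro k h1 h2; simp [hY, h1, h2]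
    have hcardYi : ((Y i).card : ℤ) = (X i).card - 1 := by
      rw [hYi]
      have := Finset.card_erase_add_one hx
      push_cast [← this]
      ring
    have hcardYj : ((Y j).card : ℤ) = (X j).card + 1 := by
      rw [hYj, Finset.card_insert_of_notMem hxj]
      push_cast
      ring
    have hEYi : (inducedEdgeCount G (Y i) : ℤ) = inducedEdgeCount G (X i) - d i := by
      rw [hYi]
      have := inducedEdgeCount_erase G hx
      rw [this]
      simp only [hd]
      push_cast
      ring
    have hEYj : (inducedEdgeCount G (Y j) : ℤ) = inducedEdgeCount G (X j) + d j := by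
      rw [hYj]
      have hxmem : x ∈ insert x (X j) := Finset.mem_insert_self x _
      have := inducedEdgeCount_erase G hxmem
      rw [this, Finset.erase_insert hxj]
      have hfil : (insert x (X j)).filter (fun y => G.Adj x y)
          = (X j).filter (fun y => G.Adj x y) := by
        rw [Finset.filter_insert, if_neg (G.irrefl)]
      rw [hfil]
      simp only [hd]
      push_cast
      ring
    have hA := keysum j hji (fun k => (hs k : ℤ) * (Y k).card)
      (fun k => (hs k : ℤ) * (X k).card)
      (fun k h1 h2 => by simp only [hYk k h1 h2])
    have hB := keysum j hji (fun k => (inducedEdgeCount G (Y k) : ℤ))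
      (fun k => (inducedEdgeCount G (X k) : ℤ))
      (fun k h1 h2 => by simp only [hYk k h1 h2])
    rw [hcardYi, hcardYj] at hA
    rw [hEYi, hEYj] at hB
    unfold partitionValue at hineq
    have hdiff : partitionValue G hs Y - partitionValue G hs X
        = ((hs j : ℤ) - hs i) - (d j - d i) := by
      unfold partitionValue
      have e1 : (∑ k, (hs k : ℤ) * (Y k).card) - (∑ k, (hs k : ℤ) * (X k).card)
          = (hs j : ℤ) - hs i := by rw [hA]; ring
      have e2 : (∑ k, (inducedEdgeCount G (Y k) : ℤ))
          - (∑ k, (inducedEdgeCount G (X k) : ℤ)) = d j - d i := by rw [hB]; ring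
      linarith [e1, e2]
    have hle : partitionValue G hs Y ≤ partitionValue G hs X := hmax Y hYdisj hYcover
    linarith [hdiff, hle, hdi]
  -- now sum up: ∑ d k = degree of x ≤ h, but ∑ (hs k + 1) = h + 2
  have hsumd : ∑ k, d k = (G.degree x : ℤ) := by
    have huniv : (Finset.univ : Finset V) = Finset.univ.biUnion X := by
      ext v
      simp only [Finset.mem_biUnion, Finset.mem_univ, true_and, true_iff]
      exact hcover v
    have hdeg : G.degree x = ((Finset.univ : Finset V).filter (fun y => G.Adj x y)).card := by
      rw [SimpleGraph.degree, SimpleGraph.neighborFinset_eq_filter]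
    rw [hdeg, huniv, Finset.filter_biUnion, Finset.card_biUnion]
    · push_cast
      rfl
    · intro a _ b _ hab
      exact Finset.disjoint_filter_filter (hdisj a b hab)
  have hsum2 : ∑ k, ((hs k : ℤ) + 1) ≤ ∑ k, d k := by
    apply Finset.sum_le_sum
    intro k _
    by_cases hk : k = i
    · subst hk; exact hdi
    · exact claim k hk
  rw [Finset.sum_add_distrib, hsum, Finset.sum_const, Finset.card_univ, Fintype.card_fin] at hsum2
  have hdegle : (G.degree x : ℤ) ≤ h := by
    exact_mod_cast hΔ ▸ G.degree_le_maxDegree x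
  rw [hsumd] at hsum2
  simp only [nsmul_eq_mul, mul_one] at hsum2
  linarith
end

section
/- In the Paley graph P(a) (a a prime power with a ≡ 1 mod 4), the independence number satisfies α(P(a)) ≤ √a. Consequently, if a ≤ (r-1)² then α(P(a)) ≤ r - 1. -/
/-- The independence number of a graph: the clique number of the complement. -/
noncomputable def SimpleGraph.indepNum' {V : Type*} (G : SimpleGraph V) : ℕ :=
  Gᶜ.cliqueNum

/-- The Paley graph on a finite field `F` (with `|F| ≡ 1 (mod 4)` this symmetrization
agrees with the usual definition): `x ~ y` iff `x ≠ y` and `x - y` is a nonzero square. -/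
def paleyGraph (F : Type*) [Field F] : SimpleGraph F :=
  SimpleGraph.fromRel (fun x y => IsSquare (x - y))

/-!
Let `s` be an independent set of `P(a)`, so that no difference of two distinct elements of `s`
is a square, and fix a nonsquare `m`. The map `(x, y) ↦ y - m x` is injective on `s × s`:
if `y₁ - y₂ = m (x₁ - x₂)` with `x₁ ≠ x₂`, then `y₁ - y₂` is a nonzero product of two
nonsquares, hence a square, which is impossible for `y₁, y₂ ∈ s`. Therefore `|s|² ≤ a`.
-/

open Finset

namespace FiniteField

variable {F : Type*} [Field F] [Fintype F]

theorem isSquare_mul_of_not_isSquare {a b : F} (ha : ¬IsSquare a) (hb : ¬IsSquare b) :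
    IsSquare (a * b) := by
  classical
  have hab : a * b ≠ 0 := mul_ne_zero (fun h => ha (h ▸ .zero)) (fun h => hb (h ▸ .zero))
  rw [← quadraticChar_one_iff_isSquare hab, map_mul,
    quadraticChar_neg_one_iff_not_isSquare.2 ha, quadraticChar_neg_one_iff_not_isSquare.2 hb]
  norm_num

theorem injOn_sub_mul_of_pairwise_not_isSquare_sub {m : F} (hm : ¬IsSquare m) {s : Set F}
    (hs : s.Pairwise fun x y => ¬IsSquare (x - y)) :
    (s ×ˢ s).InjOn fun p : F × F => p.2 - m * p.1 := by
  rintro ⟨x₁, y₁⟩ ⟨hx₁, hy₁⟩ ⟨x₂, y₂⟩ ⟨hx₂, hy₂⟩ h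
  have hy : y₁ - y₂ = m * (x₁ - x₂) := by linear_combination h
  obtain rfl | hx := eq_or_ne x₁ x₂
  · rw [sub_self, mul_zero, sub_eq_zero] at hy
    rw [hy]
  · have hm₀ : m ≠ 0 := by rintro rfl; exact hm .zero
    have hy' : y₁ ≠ y₂ := by
      rw [← sub_ne_zero, hy]
      exact mul_ne_zero hm₀ (sub_ne_zero.2 hx)
    exact absurd (hy ▸ isSquare_mul_of_not_isSquare hm (hs hx₁ hx₂ hx)) (hs hy₁ hy₂ hy')

theorem card_sq_le_of_pairwise_not_isSquare_sub (hF : ringChar F ≠ 2) {s : Finset F}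
    (hs : (s : Set F).Pairwise fun x y => ¬IsSquare (x - y)) : #s ^ 2 ≤ Fintype.card F := by
  obtain ⟨m, hm⟩ := exists_nonsquare hF
  rw [sq, ← card_product, ← card_univ]
  refine card_le_card_of_injOn (fun p : F × F => p.2 - m * p.1) (fun _ _ => mem_univ _) ?_
  rw [coe_product]
  exact injOn_sub_mul_of_pairwise_not_isSquare_sub hm hs

end FiniteField

section Paley

variable {F : Type*} [Field F]

theorem paleyGraph_isIndepSet_iff {s : Set F} :
    (paleyGraph F).IsIndepSet s ↔ s.Pairwise fun x y => ¬IsSquare (x - y) := by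
  refine ⟨fun h x hx y hy hxy hsq => h hx hy hxy ⟨hxy, .inl hsq⟩,
    fun h x hx y hy hxy hadj => ?_⟩
  obtain ⟨-, hsq | hsq⟩ := hadj
  exacts [h hx hy hxy hsq, h hy hx hxy.symm hsq]

theorem paleyGraph_indepNum_sq_le [Fintype F] (hF : ringChar F ≠ 2) :
    (paleyGraph F).indepNum ^ 2 ≤ Fintype.card F := by
  obtain ⟨s, hs⟩ := (paleyGraph F).exists_isNIndepSet_indepNum
  rw [← hs.card_eq]
  exact FiniteField.card_sq_le_of_pairwise_not_isSquare_sub hF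
    (paleyGraph_isIndepSet_iff.1 hs.isIndepSet)

end Paley

/-- In the Paley graph `P(a)` (`a` a prime power with `a ≡ 1 (mod 4)`), the independence
number satisfies `α(P(a)) ≤ √a`.  Consequently, if `a ≤ (r-1)²` then `α(P(a)) ≤ r - 1`. -/
theorem stmt_8 (F : Type*) [Field F] [Fintype F] (hq : Fintype.card F % 4 = 1) (r : ℕ) :
    ((paleyGraph F).indepNum' : ℝ) ≤ Real.sqrt (Fintype.card F) ∧
      (Fintype.card F ≤ (r - 1) ^ 2 → (paleyGraph F).indepNum' ≤ r - 1) := by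
  have hF : ringChar F ≠ 2 := FiniteField.even_card_iff_char_two.not.2 (by omega)
  have hα : (paleyGraph F).indepNum' ^ 2 ≤ Fintype.card F := by
    rw [SimpleGraph.indepNum', SimpleGraph.cliqueNum_compl]
    exact paleyGraph_indepNum_sq_le hF
  exact ⟨Real.le_sqrt_of_sq_le (by exact_mod_cast hα),
    fun hr => (Nat.pow_le_pow_iff_left two_ne_zero).1 (hα.trans hr)⟩
end

section
/- Let G be a k-regular graph on n vertices with adjacency matrix A and least eigenvalue λ_min < 0. Then the independence number of G satisfies α(G) ≤ n · (-λ_min)/(k - λ_min). -/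
/-!
Let `S` be an independent set of size `a` in a `k`-regular graph on `n` vertices. Since every
eigenvalue of `A` is at least `λ_min`, the matrix `A - λ_min I` is positive semidefinite; evaluate
its quadratic form at `x = n·1_S - a·1`. Independence gives `1_Sᵀ A 1_S = 0` and regularity gives
`A 1 = k 1`, so `xᵀ A x = -k n a²` while `xᵀ x = n a (n - a)`. Hence `λ_min (n - a) ≤ -k a`, that is
`a (k - λ_min) ≤ -λ_min n`.
-/

open Matrix Finset Module.End

namespace Matrix

variable {n : Type*} [Fintype n] [DecidableEq n]

theorem hasEigenvalue_mulVecLin_iff_mem_spectrum {K : Type*} [Field K] {A : Matrix n n K}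
    {μ : K} : HasEigenvalue A.mulVecLin μ ↔ μ ∈ spectrum K A := by
  rw [← toLin'_apply', hasEigenvalue_iff_mem_spectrum, spectrum_toLin']

theorem IsHermitian.posSemidef_sub_algebraMap {A : Matrix n n ℝ} (hA : A.IsHermitian) {c : ℝ}
    (hc : ∀ μ ∈ spectrum ℝ A, c ≤ μ) : (A - algebraMap ℝ _ c).PosSemidef := by
  have hB : (A - algebraMap ℝ _ c).IsHermitian := hA.isSelfAdjoint.sub (.algebraMap _ (.all c))
  refine hB.posSemidef_iff_eigenvalues_nonneg.mpr fun i => ?_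
  have hi := hB.eigenvalues_mem_spectrum_real i
  rw [← spectrum.sub_singleton_eq, Set.mem_sub] at hi
  obtain ⟨μ, hμ, _, rfl, hμi⟩ := hi
  simpa only [Pi.zero_apply, ← hμi, sub_nonneg] using hc μ hμ

theorem IsHermitian.mul_dotProduct_self_le {A : Matrix n n ℝ} (hA : A.IsHermitian) {c : ℝ}
    (hc : ∀ μ ∈ spectrum ℝ A, c ≤ μ) (x : n → ℝ) : c * (x ⬝ᵥ x) ≤ x ⬝ᵥ A *ᵥ x := by
  have := (hA.posSemidef_sub_algebraMap hc).dotProduct_mulVec_nonneg x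
  rwa [star_trivial, Algebra.algebraMap_eq_smul_one, sub_mulVec, smul_mulVec, one_mulVec,
    dotProduct_sub, dotProduct_smul, smul_eq_mul, sub_nonneg] at this

end Matrix

namespace SimpleGraph

variable {V : Type*} [Fintype V] {G : SimpleGraph V} [DecidableRel G.Adj] {k : ℕ}

theorem IsRegularOfDegree.adjMatrix_mulVec_one {α : Type*} [NonAssocSemiring α]
    (hG : G.IsRegularOfDegree k) : G.adjMatrix α *ᵥ 1 = (k : α) • 1 := by
  ext v
  simpa using adjMatrix_mulVec_const_apply_of_regular (a := (1 : α)) hG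

theorem IsRegularOfDegree.one_vecMul_adjMatrix {α : Type*} [CommSemiring α]
    (hG : G.IsRegularOfDegree k) : 1 ᵥ* G.adjMatrix α = (k : α) • 1 := by
  rw [← transpose_adjMatrix, vecMul_transpose, hG.adjMatrix_mulVec_one]

theorem IsIndepSet.indicator_dotProduct_adjMatrix_mulVec {α : Type*} [NonAssocSemiring α]
    {s : Finset V} (hs : G.IsIndepSet s) :
    (s : Set V).indicator 1 ⬝ᵥ G.adjMatrix α *ᵥ (s : Set V).indicator 1 = 0 := by
  rw [dotProduct_mulVec_adjMatrix]
  refine sum_eq_zero fun i _ => sum_eq_zero fun j _ => ?_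
  split_ifs with hij
  · by_cases hi : i ∈ s <;> by_cases hj : j ∈ s
    · exact absurd hij (hs (mem_coe.2 hi) (mem_coe.2 hj) hij.ne)
    all_goals simp [hi, hj]
  · rfl

theorem IsIndepSet.card_le_hoffman [DecidableEq V] (hG : G.IsRegularOfDegree k) {s : Finset V}
    (hs : G.IsIndepSet s) {c : ℝ} (hc : ∀ μ ∈ spectrum ℝ (G.adjMatrix ℝ), c ≤ μ) (hc0 : c < 0) :
    (#s : ℝ) ≤ Fintype.card V * (-c) / (k - c) := by
  set χ : V → ℝ := (s : Set V).indicator 1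
  set n : ℝ := (Fintype.card V : ℝ)
  set a : ℝ := (#s : ℝ)
  have hχ1 : χ ⬝ᵥ 1 = a := by simp [χ, a, dotProduct, Set.indicator_apply]
  have hχχ : χ ⬝ᵥ χ = a := by simp [χ, a, dotProduct, Set.indicator_apply]
  have h11 : (1 : V → ℝ) ⬝ᵥ 1 = n := by simp [n, dotProduct]
  have hχAχ : χ ⬝ᵥ G.adjMatrix ℝ *ᵥ χ = 0 := hs.indicator_dotProduct_adjMatrix_mulVec
  have h1Aχ : 1 ⬝ᵥ G.adjMatrix ℝ *ᵥ χ = k * a := by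
    rw [dotProduct_mulVec, hG.one_vecMul_adjMatrix, smul_dotProduct, dotProduct_comm, hχ1,
      smul_eq_mul]
  have key := (isHermitian_adjMatrix ℝ G).mul_dotProduct_self_le hc (n • χ - a • 1)
  simp only [mulVec_sub, mulVec_smul, hG.adjMatrix_mulVec_one, dotProduct_sub, sub_dotProduct,
    dotProduct_smul, smul_dotProduct, hχ1, hχχ, h11, hχAχ, h1Aχ, dotProduct_comm 1 χ,
    smul_eq_mul] at key
  have hkc : 0 < (k : ℝ) - c := by linarith [k.cast_nonneg (α := ℝ)]
  rw [le_div_iff₀ hkc]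
  obtain ha | ha := (by positivity : 0 ≤ a).eq_or_lt
  · rw [← ha]
    nlinarith [(by positivity : 0 ≤ n)]
  have hna : 0 < n * a := mul_pos (ha.trans_le (Nat.cast_le.mpr (card_le_univ s))) ha
  have : c * (n - a) + k * a ≤ 0 := nonpos_of_mul_nonpos_right (by linarith) hna
  linarith

end SimpleGraph

theorem stmt_9_general {V : Type*} [Fintype V] [DecidableEq V] (G : SimpleGraph V)
    [DecidableRel G.Adj] (k : ℕ) (hreg : G.IsRegularOfDegree k)
    (lammin : ℝ)
    (h_min : ∀ μ : ℝ, Module.End.HasEigenvalue (Matrix.mulVecLin (G.adjMatrix ℝ)) μ →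
      lammin ≤ μ)
    (h_neg : lammin < 0) :
    (G.indepNum' : ℝ) ≤ (Fintype.card V : ℝ) * (-lammin) / ((k : ℝ) - lammin) := by
  obtain ⟨s, hs⟩ := G.exists_isNIndepSet_indepNum
  rw [SimpleGraph.indepNum', SimpleGraph.cliqueNum_compl, ← hs.card_eq]
  exact hs.isIndepSet.card_le_hoffman hreg
    (fun μ hμ => h_min μ (hasEigenvalue_mulVecLin_iff_mem_spectrum.2 hμ)) h_neg

/-- Hoffman's ratio bound: if `G` is a `k`-regular graph on `n` vertices whose adjacency
matrix has least eigenvalue `λmin < 0`, then `α(G) ≤ n · (-λmin)/(k - λmin)`. -/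
theorem stmt_9 {V : Type*} [Fintype V] [DecidableEq V] (G : SimpleGraph V)
    [DecidableRel G.Adj] (k : ℕ) (hreg : G.IsRegularOfDegree k)
    (lammin : ℝ)
    (h_eig : Module.End.HasEigenvalue (Matrix.mulVecLin (G.adjMatrix ℝ)) lammin)
    (h_min : ∀ μ : ℝ, Module.End.HasEigenvalue (Matrix.mulVecLin (G.adjMatrix ℝ)) μ →
      lammin ≤ μ)
    (h_neg : lammin < 0) :
    (G.indepNum' : ℝ) ≤ (Fintype.card V : ℝ) * (-lammin) / ((k : ℝ) - lammin) :=
  stmt_9_general G k hreg lammin h_min h_neg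
end

section
/- For integers n ≥ k + 2 and 2 ≤ k ≤ ⌊n/2⌋, the independence number of the k-th power of the n-cycle satisfies α(C_n^k) = ⌊n/(k+1)⌋. -/
/-- The `k`-th power of the `n`-cycle: vertices are `ZMod n`, and distinct `x, y` are
adjacent iff `min{|x-y|, n-|x-y|} ≤ k` (here `(x-y).val` and `(y-x).val` are the two
circular distances). -/
def cyclePower (n k : ℕ) : SimpleGraph (ZMod n) where
  Adj x y := x ≠ y ∧ min (x - y).val (y - x).val ≤ k
  symm := by
    constructor
    rintro x y ⟨h1, h2⟩
    exact ⟨h1.symm, by rwa [min_comm]⟩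
  loopless := by
    constructor
    rintro x ⟨h, -⟩
    exact h rfl

/-!
Distinct vertices of an independent set of `C_n^k` are at circular distance greater than `k`, so
the arcs `{x, x + 1, …, x + k}` at its points are pairwise disjoint; having `k + 1` points each,
at most `⌊n/(k+1)⌋` of them fit into `ZMod n`. Conversely, with `m = ⌊n/(k+1)⌋`, the multiples
`0, k + 1, …, (m - 1)(k + 1)` are independent: consecutive ones are `k + 1` apart, and going
around from the last to the first leaves a gap of `n - (m - 1)(k + 1) ≥ k + 1`.
-/

open Finset SimpleGraph

lemma SimpleGraph.indepNum'_eq_indepNum {V : Type*} (G : SimpleGraph V) :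
    G.indepNum' = G.indepNum :=
  G.cliqueNum_compl

section CyclePower

variable {n k : ℕ}

lemma not_cyclePower_adj_iff {x y : ZMod n} (hxy : x ≠ y) :
    ¬(cyclePower n k).Adj x y ↔ k < (x - y).val ∧ k < (y - x).val := by
  simp [cyclePower, hxy]

variable [NeZero n]

/-- The arc `{x, x + 1, …, x + k}` of `ZMod n`. -/
def cycleArc (k : ℕ) (x : ZMod n) : Finset (ZMod n) := {z | (z - x).val ≤ k}

lemma card_cycleArc (hkn : k < n) (x : ZMod n) : #(cycleArc k x) = k + 1 := by
  rw [← card_range (k + 1)]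
  have hval : ∀ i < k + 1, (i : ZMod n).val = i := fun i hi =>
    ZMod.val_natCast_of_lt (by omega)
  refine card_nbij' (fun z => (z - x).val) (fun i => x + i) ?_ ?_ ?_ ?_
  · intro z hz
    simp only [cycleArc, coe_filter, mem_univ, true_and, Set.mem_ofPred_eq] at hz
    simpa using Nat.lt_succ_of_le hz
  · intro i hi
    simp only [coe_range, Set.mem_Iio] at hi
    simp [cycleArc, hval i hi, Nat.le_of_lt_succ hi]
  · intro z _
    simp
  · intro i hi
    simp only [coe_range, Set.mem_Iio] at hi
    simp [hval i hi]

lemma disjoint_cycleArc {x y : ZMod n} (hxy : k < (x - y).val) (hyx : k < (y - x).val) :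
    Disjoint (cycleArc k x) (cycleArc k y) := by
  refine disjoint_left.2 fun z hzx hzy => ?_
  simp only [cycleArc, mem_filter, mem_univ, true_and] at hzx hzy
  rcases le_total (z - x).val (z - y).val with h | h
  · have := ZMod.val_sub h
    rw [sub_sub_sub_cancel_left] at this
    omega
  · have := ZMod.val_sub h
    rw [sub_sub_sub_cancel_left] at this
    omega

lemma card_mul_succ_le_of_isIndepSet_cyclePower {s : Finset (ZMod n)}
    (hs : (cyclePower n k).IsIndepSet s) (hkn : k < n) : #s * (k + 1) ≤ n := by
  have hdisj : (s : Set (ZMod n)).PairwiseDisjoint (cycleArc k) := fun x hx y hy hxy =>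
    have ⟨h₁, h₂⟩ := (not_cyclePower_adj_iff hxy).1 (hs hx hy hxy)
    disjoint_cycleArc h₁ h₂
  calc #s * (k + 1) = #(s.biUnion (cycleArc k)) := by
        rw [card_biUnion hdisj, sum_const_nat fun x _ => card_cycleArc hkn x]
    _ ≤ Fintype.card (ZMod n) := card_le_univ _
    _ = n := ZMod.card n

lemma not_cyclePower_adj_of_val {x y : ZMod n} (hxy : x.val + k < y.val) (hy : y.val + k < n) :
    ¬(cyclePower n k).Adj x y := by
  have hne : x ≠ y := fun h => by simp [h] at hxy
  have hyx : (y - x).val = y.val - x.val := ZMod.val_sub (by omega)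
  have hxy' : (x - y).val = n - (y - x).val := by
    rw [← neg_sub, ZMod.neg_val, if_neg (sub_ne_zero.2 hne.symm)]
  rw [not_cyclePower_adj_iff hne]
  omega

lemma exists_isNIndepSet_cyclePower :
    ∃ s, (cyclePower n k).IsNIndepSet (n / (k + 1)) s := by
  set m := n / (k + 1)
  have hmul : ∀ i j, i < j → i * (k + 1) + k < j * (k + 1) := fun i j hij => by
    have h := Nat.mul_le_mul_right (k + 1) (Nat.succ_le_of_lt hij)
    rw [Nat.succ_mul] at h
    omega
  have hlt : ∀ i < m, i * (k + 1) + k < n := fun i hi =>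
    (hmul i m hi).trans_le (Nat.div_mul_le_self n (k + 1))
  have hval : ∀ i < m, ((i * (k + 1) : ℕ) : ZMod n).val = i * (k + 1) := fun i hi =>
    ZMod.val_natCast_of_lt (by have := hlt i hi; omega)
  have hindep : ∀ i j, i < j → j < m →
      ¬(cyclePower n k).Adj ((i * (k + 1) : ℕ) : ZMod n) ((j * (k + 1) : ℕ) : ZMod n) :=
    fun i j hij hj => not_cyclePower_adj_of_val
      (by rw [hval i (hij.trans hj), hval j hj]; exact hmul i j hij)
      (by rw [hval j hj]; exact hlt j hj)
  refine ⟨(range m).image fun i => ((i * (k + 1) : ℕ) : ZMod n), ⟨?_, ?_⟩⟩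
  · simp only [coe_image, coe_range]
    rintro _ ⟨i, hi, rfl⟩ _ ⟨j, hj, rfl⟩ hij
    rcases lt_trichotomy i j with h | rfl | h
    · exact hindep i j h hj
    · exact absurd rfl hij
    · exact fun hadj => hindep j i h hi hadj.symm
  · rw [card_image_of_injOn, card_range]
    intro i hi j hj hij
    have := congrArg ZMod.val hij
    simp only [mem_coe, mem_range] at hi hj
    rw [hval i hi, hval j hj] at this
    exact Nat.eq_of_mul_eq_mul_right k.succ_pos this

end CyclePower

theorem stmt_14_general (n k : ℕ) (hnk : k + 2 ≤ n) :
    (cyclePower n k).indepNum' = n / (k + 1) := by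
  have : NeZero n := ⟨by omega⟩
  rw [indepNum'_eq_indepNum]
  apply le_antisymm
  · obtain ⟨s, hs⟩ := (cyclePower n k).exists_isNIndepSet_indepNum
    rw [← hs.card_eq]
    exact (Nat.le_div_iff_mul_le k.succ_pos).2
      (card_mul_succ_le_of_isIndepSet_cyclePower hs.isIndepSet (by omega))
  · obtain ⟨s, hs⟩ : ∃ s, (cyclePower n k).IsNIndepSet (n / (k + 1)) s :=
      exists_isNIndepSet_cyclePower
    rw [← hs.card_eq]
    exact hs.isIndepSet.card_le_indepNum

/-- For integers `n ≥ k + 2` and `2 ≤ k ≤ ⌊n/2⌋`, the independence number of the `k`-th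
power of the `n`-cycle satisfies `α(C_n^k) = ⌊n/(k+1)⌋`. -/
theorem stmt_14 (n k : ℕ) (hnk : k + 2 ≤ n) (hk2 : 2 ≤ k) (hk : k ≤ n / 2) :
    (cyclePower n k).indepNum' = n / (k + 1) :=
  stmt_14_general n k hnk
end
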